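/- arXiv:1808.10771 — 2 statements merged into one kernel-verified Lean document; each statement's English description precedes it below -/
import Mathlib

section
/- Let p > 1, m ≥ 1, C₀ ∈ (0, 1], α₀ ≥ 1, and define sequences α_{k+1} = 2·α_k·p and l_{k+1} = C₀·l_k^p/(2·α_k·p)^{2m} for k ≥ 0. If l₀ ≥ (2p)^{2mp/(p-1)²}·α₀^{2m/(p-1)}·C₀^{-1/(p-1)}, then for every k ≥ 0, l_k ≥ (2p)^{2mk/(p-1)}; in particular l_k → ∞ as k → ∞. -/
/-!
Since `α k = α₀ (2p)^k`, the recursion reads `l (k+1) = C₀ l_k^p / (α₀ (2p)^(k+1))^(2m)`, and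
`L k = (2p)^(2mk/(p-1)) T`, with `T` the threshold imposed on `l₀`, solves it with equality.
The right-hand side is monotone in `l_k`, so `L 0 ≤ l 0` propagates to `L k ≤ l k`;
finally `T ≥ 1` because `p > 1`, `α₀ ≥ 1` and `C₀ ≤ 1`.
-/

open Filter

theorem le_of_rpow_recurrence {p : ℝ} (hp : 0 ≤ p) {c L l : ℕ → ℝ} (hc : ∀ k, 0 ≤ c k)
    (hL : ∀ k, 0 ≤ L k) (hLrec : ∀ k, L (k + 1) = c k * L k ^ p)
    (hlrec : ∀ k, l (k + 1) = c k * l k ^ p) (h0 : L 0 ≤ l 0) (k : ℕ) : L k ≤ l k := by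
  induction k with
  | zero => exact h0
  | succ k ih =>
    rw [hLrec, hlrec]
    exact mul_le_mul_of_nonneg_left (Real.rpow_le_rpow (hL k) ih hp) (hc k)

theorem eq_mul_pow_of_forall_succ_eq_mul {M : Type*} [Monoid M] {q : M} {α : ℕ → M}
    (hrec : ∀ k, α (k + 1) = α k * q) (k : ℕ) : α k = α 0 * q ^ k := by
  induction k with
  | zero => simp
  | succ k ih => rw [hrec, ih, pow_succ, mul_assoc]

noncomputable def blowupThreshold (p q a C s : ℝ) : ℝ :=
  q ^ (s * p / (p - 1) ^ 2) * a ^ (s / (p - 1)) * C ^ (-(1 / (p - 1)))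

section

variable {p q a C s : ℝ}

theorem one_le_blowupThreshold (hp : 1 < p) (hq : 1 ≤ q) (ha : 1 ≤ a) (hC : 0 < C) (hC' : C ≤ 1)
    (hs : 0 ≤ s) : 1 ≤ blowupThreshold p q a C s := by
  have hp' : 0 < p - 1 := sub_pos.mpr hp
  have hq' : 1 ≤ q ^ (s * p / (p - 1) ^ 2) := Real.one_le_rpow hq (by positivity)
  have ha' : 1 ≤ a ^ (s / (p - 1)) := Real.one_le_rpow ha (by positivity)
  have hC'' : 1 ≤ C ^ (-(1 / (p - 1))) :=
    Real.one_le_rpow_of_pos_of_le_one_of_nonpos hC hC' (neg_nonpos.mpr (by positivity))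
  calc (1 : ℝ) = 1 * 1 * 1 := by norm_num
    _ ≤ blowupThreshold p q a C s := by unfold blowupThreshold; gcongr

theorem rpow_mul_blowupThreshold_succ (hp : p ≠ 1) (hq : 0 < q) (ha : 0 < a) (hC : 0 < C)
    (k : ℕ) :
    q ^ (s * (k + 1 : ℕ) / (p - 1)) * blowupThreshold p q a C s
      = C / (a * q ^ (k + 1)) ^ s * (q ^ (s * k / (p - 1)) * blowupThreshold p q a C s) ^ p := by
  have hp' : p - 1 ≠ 0 := sub_ne_zero.mpr hp
  unfold blowupThreshold
  refine Real.log_injOn_pos (Set.mem_Ioi.mpr (by positivity)) (Set.mem_Ioi.mpr (by positivity)) ?_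
  simp (disch := positivity) only [Real.log_mul, Real.log_div, Real.log_rpow, Real.log_pow]
  push_cast
  field_simp
  ring

end

theorem tendsto_rpow_mul_natCast_atTop {q c : ℝ} (hq : 1 < q) (hc : 0 < c) :
    Tendsto (fun k : ℕ => q ^ (c * k)) atTop atTop :=
  (tendsto_rpow_atTop_of_base_gt_one q hq).comp
    (tendsto_natCast_atTop_atTop.const_mul_atTop hc)

theorem blowup_iteration (p C₀ α₀ : ℝ) (m : ℕ) (hp : 1 < p) (hm : 1 ≤ m)
    (hC₀ : 0 < C₀) (hC₀' : C₀ ≤ 1) (hα₀ : 1 ≤ α₀)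
    (α l : ℕ → ℝ) (hα0 : α 0 = α₀)
    (hαrec : ∀ k, α (k + 1) = 2 * α k * p)
    (hlrec : ∀ k, l (k + 1) = C₀ * l k ^ p / (2 * α k * p) ^ (2 * m))
    (hl0 : (2 * p) ^ (2 * (m : ℝ) * p / (p - 1) ^ 2) * α₀ ^ (2 * (m : ℝ) / (p - 1))
        * C₀ ^ (-(1 / (p - 1))) ≤ l 0) :
    (∀ k : ℕ, (2 * p) ^ (2 * (m : ℝ) * (k : ℝ) / (p - 1)) ≤ l k) ∧
      Tendsto l atTop atTop := by
  have hq : 1 < 2 * p := by linarith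
  have hα (k : ℕ) : 2 * α k * p = α₀ * (2 * p) ^ (k + 1) := by
    have hgeom (k : ℕ) : α (k + 1) = α k * (2 * p) := by rw [hαrec]; ring
    rw [eq_mul_pow_of_forall_succ_eq_mul hgeom k, hα0]
    ring
  have hT : 1 ≤ blowupThreshold p (2 * p) α₀ C₀ (2 * m) :=
    one_le_blowupThreshold hp hq.le hα₀ hC₀ hC₀' (by positivity)
  have hlower (k : ℕ) :
      (2 * p) ^ (2 * (m : ℝ) * k / (p - 1)) * blowupThreshold p (2 * p) α₀ C₀ (2 * m) ≤ l k :=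
    le_of_rpow_recurrence (p := p) (l := l)
      (L := fun k => (2 * p) ^ (2 * (m : ℝ) * k / (p - 1)) * blowupThreshold p (2 * p) α₀ C₀ (2 * m))
      (c := fun k => C₀ / (α₀ * (2 * p) ^ (k + 1)) ^ (2 * (m : ℝ))) (by linarith)
      (fun k => by positivity) (fun k => mul_nonneg (by positivity) (zero_le_one.trans hT))
      (rpow_mul_blowupThreshold_succ hp.ne' (by linarith) (by linarith) hC₀)
      (fun k => by rw [hlrec, hα, ← Real.rpow_natCast]; push_cast; ring)
      (by simpa [blowupThreshold] using hl0) k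
  have hbound (k : ℕ) : (2 * p) ^ (2 * (m : ℝ) * (k : ℝ) / (p - 1)) ≤ l k :=
    (le_mul_of_one_le_right (by positivity) hT).trans (hlower k)
  refine ⟨hbound, tendsto_atTop_mono hbound ?_⟩
  simp_rw [mul_div_right_comm (2 * (m : ℝ))]
  exact tendsto_rpow_mul_natCast_atTop hq (by have := sub_pos.mpr hp; positivity)
end

section
/- Let n ≥ 3, 2m < n, 0 ≤ a < 2m, p > 1, and suppose u is a positive continuous function on ℝⁿ ∖ {0} satisfying the integral equation u(x) = C ∫_{ℝⁿ} u(y)^p/(|x-y|^{n-2m}|y|^a) dy for all x ≠ 0, where C > 0. Define the Kelvin transform ū(x) := |x|^{2m-n}·u(x/|x|²) for x ≠ 0. Then ū satisfies ū(x) = C ∫_{ℝⁿ} ū(y)^p/(|x-y|^{n-2m}|y|^τ) dy for all x ≠ 0, where τ := n + 2m - a - p(n - 2m). -/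
/-!
The inversion `y ↦ y / ‖y‖²` is an involution of `ℝⁿ ∖ {0}` with Jacobian `‖y‖^(-2n)`, and it
rescales distances by `‖x - y/‖y‖²‖ = ‖x‖ / ‖y‖ · ‖x/‖x‖² - y‖`. Substituting `y ↦ y/‖y‖²` in the
integral equation for the Kelvin transform therefore reproduces the integral equation for `u`
at `x/‖x‖²`: the exponent `τ` is exactly the one for which all powers of `‖y‖` cancel against
the Jacobian.
-/

open MeasureTheory EuclideanGeometry Module Real Set

section Inversion

variable {E : Type*} [NormedAddCommGroup E] [InnerProductSpace ℝ E]

theorem inversion_zero_one_apply (y : E) : inversion (0 : E) 1 y = (‖y‖ ^ 2)⁻¹ • y := by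
  simp [inversion_def, dist_eq_norm, inv_pow]

theorem norm_inversion_zero_one (y : E) : ‖inversion (0 : E) 1 y‖ = ‖y‖⁻¹ := by
  simpa [dist_eq_norm] using dist_inversion_center (0 : E) y 1

theorem norm_sub_inversion_zero_one {x y : E} (hx : x ≠ 0) (hy : y ≠ 0) :
    ‖x - inversion 0 1 y‖ = ‖x‖ / ‖y‖ * ‖inversion 0 1 x - y‖ := by
  have h := dist_inversion_inversion ((inversion_eq_center one_ne_zero).not.2 hx) hy 1
  simp only [inversion_inversion _ one_ne_zero, dist_eq_norm, sub_zero, norm_inversion_zero_one]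
    at h
  rw [h, one_pow, one_div, mul_inv, inv_inv, div_eq_mul_inv]

variable [FiniteDimensional ℝ E]

theorem abs_det_fderiv_inversion (c y : E) (R : ℝ) :
    |((R / dist y c) ^ 2 • ((ℝ ∙ (y - c))ᗮ.reflection : E →L[ℝ] E)).det|
      = (R / dist y c) ^ (2 * finrank ℝ E) := by
  rw [ContinuousLinearMap.det, ContinuousLinearMap.toLinearMap_smul, LinearMap.det_smul]
  erw [Submodule.det_reflection]
  rw [abs_mul, abs_neg_one_pow, mul_one, abs_pow, abs_of_nonneg (sq_nonneg _), ← pow_mul]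

variable [MeasurableSpace E] [BorelSpace E] (μ : Measure E) [μ.IsAddHaarMeasure]
  {F : Type*} [NormedAddCommGroup F] [NormedSpace ℝ F]

theorem integral_eq_integral_smul_inversion (c : E) {R : ℝ} (hR : R ≠ 0) (g : E → F) :
    ∫ y, g y ∂μ = ∫ y, (R / dist y c) ^ (2 * finrank ℝ E) • g (inversion c R y) ∂μ := by
  rcases subsingleton_or_nontrivial E with hE | hE
  · simp only [finrank_zero_of_subsingleton, mul_zero, pow_zero, one_smul]
    exact integral_congr_ae (.of_forall fun y => congrArg g (Subsingleton.elim _ _))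
  have hs : MeasurableSet ({c}ᶜ : Set E) := (measurableSet_singleton c).compl
  have himage : inversion c R '' {c}ᶜ = {c}ᶜ := by
    rw [image_compl_eq (inversion_involutive c hR).bijective, image_singleton, inversion_self]
  have hderiv : ∀ y ∈ ({c}ᶜ : Set E), HasFDerivWithinAt (inversion c R)
      ((R / dist y c) ^ 2 • ((ℝ ∙ (y - c))ᗮ.reflection : E →L[ℝ] E)) {c}ᶜ y :=
    fun y hy => (hasFDerivAt_inversion hy).hasFDerivWithinAt
  have hcov := integral_image_eq_integral_abs_det_fderiv_smul μ hs hderiv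
    (inversion_involutive c hR).injective.injOn g
  simp only [abs_det_fderiv_inversion, himage] at hcov
  rwa [integral_eq_setIntegral (Measure.ae_ne μ c), integral_eq_setIntegral (Measure.ae_ne μ c)]

end Inversion

theorem kelvin_weight_identity {r X D U : ℝ} (hr : 0 < r) (hX : 0 < X) (hD : 0 ≤ D) (hU : 0 ≤ U)
    (n : ℕ) (m a p : ℝ) :
    (1 / r) ^ (2 * n) • ((r⁻¹ ^ (2 * m - n) * U) ^ p /
        ((X / r * D) ^ ((n : ℝ) - 2 * m) * r⁻¹ ^ ((n : ℝ) + 2 * m - a - p * (n - 2 * m))))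
      = X ^ (2 * m - (n : ℝ)) * (U ^ p / (D ^ ((n : ℝ) - 2 * m) * r ^ a)) := by
  rw [smul_eq_mul, mul_rpow (by positivity) hU, mul_rpow (by positivity) hD, div_rpow hX.le hr.le,
    ← rpow_natCast, ← rpow_mul (by positivity), one_div, inv_rpow hr.le, inv_rpow hr.le,
    inv_rpow hr.le, ← rpow_neg hr.le, ← rpow_neg hr.le, ← rpow_neg hr.le,
    show 2 * m - (n : ℝ) = -(n - 2 * m) by ring, rpow_neg hX.le]
  generalize D ^ ((n : ℝ) - 2 * m) = Dα
  -- If `Dα = 0`, both sides vanish by the convention `t / 0 = 0`.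
  rcases eq_or_ne Dα 0 with hDα | hDα
  · simp [hDα]
  have hXα : X ^ ((n : ℝ) - 2 * m) ≠ 0 := (rpow_pos_of_pos hX _).ne'
  field_simp
  rw [mul_right_comm _ (U ^ p), mul_right_comm _ (U ^ p), mul_comm _ (U ^ p), mul_assoc,
    mul_assoc, ← rpow_add hr, ← rpow_add hr, ← rpow_add hr]
  congr 2
  push_cast
  ring

theorem kelvin_transform_integral_equation_general (n m : ℕ) (a p C : ℝ)
    (u : EuclideanSpace ℝ (Fin n) → ℝ)
    (hu_pos : ∀ x : EuclideanSpace ℝ (Fin n), x ≠ 0 → 0 < u x)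
    (heq : ∀ x : EuclideanSpace ℝ (Fin n), x ≠ 0 →
      u x = C * ∫ y : EuclideanSpace ℝ (Fin n),
        u y ^ p / (‖x - y‖ ^ ((n : ℝ) - 2 * m) * ‖y‖ ^ a)) :
    ∀ x : EuclideanSpace ℝ (Fin n), x ≠ 0 →
      ‖x‖ ^ (2 * (m : ℝ) - n) * u ((‖x‖ ^ 2)⁻¹ • x)
        = C * ∫ y : EuclideanSpace ℝ (Fin n),
            (‖y‖ ^ (2 * (m : ℝ) - n) * u ((‖y‖ ^ 2)⁻¹ • y)) ^ p /
              (‖x - y‖ ^ ((n : ℝ) - 2 * m) *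
                ‖y‖ ^ ((n : ℝ) + 2 * m - a - p * ((n : ℝ) - 2 * m))) := by
  intro x hx
  have : Nontrivial (EuclideanSpace ℝ (Fin n)) := nontrivial_of_ne x 0 hx
  simp_rw [← inversion_zero_one_apply]
  conv_rhs => rw [integral_eq_integral_smul_inversion volume 0 one_ne_zero]
  rw [heq _ ((inversion_eq_center one_ne_zero).not.2 hx), mul_left_comm, ← integral_const_mul]
  congr 1
  refine integral_congr_ae ?_
  filter_upwards [Measure.ae_ne volume 0] with y hy
  rw [inversion_inversion _ one_ne_zero, norm_inversion_zero_one, norm_sub_inversion_zero_one hx hy,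
    dist_zero_right, finrank_euclideanSpace_fin]
  exact (kelvin_weight_identity (norm_pos_iff.2 hy) (norm_pos_iff.2 hx) (norm_nonneg _)
    (hu_pos y hy).le n m a p).symm

theorem kelvin_transform_integral_equation (n m : ℕ) (a p C : ℝ)
    (hn : 3 ≤ n) (hmn : 2 * m < n) (ha0 : 0 ≤ a) (ha : a < 2 * m)
    (hp : 1 < p) (hC : 0 < C)
    (u : EuclideanSpace ℝ (Fin n) → ℝ)
    (hu_pos : ∀ x : EuclideanSpace ℝ (Fin n), x ≠ 0 → 0 < u x)
    (hu_cont : ContinuousOn u {x : EuclideanSpace ℝ (Fin n) | x ≠ 0})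
    (heq : ∀ x : EuclideanSpace ℝ (Fin n), x ≠ 0 →
      u x = C * ∫ y : EuclideanSpace ℝ (Fin n),
        u y ^ p / (‖x - y‖ ^ ((n : ℝ) - 2 * m) * ‖y‖ ^ a)) :
    ∀ x : EuclideanSpace ℝ (Fin n), x ≠ 0 →
      ‖x‖ ^ (2 * (m : ℝ) - n) * u ((‖x‖ ^ 2)⁻¹ • x)
        = C * ∫ y : EuclideanSpace ℝ (Fin n),
            (‖y‖ ^ (2 * (m : ℝ) - n) * u ((‖y‖ ^ 2)⁻¹ • y)) ^ p /
              (‖x - y‖ ^ ((n : ℝ) - 2 * m) *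
                ‖y‖ ^ ((n : ℝ) + 2 * m - a - p * ((n : ℝ) - 2 * m))) :=
  kelvin_transform_integral_equation_general n m a p C u hu_pos heq
end
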